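/- arXiv:2512.16996 — 2 statements merged into one kernel-verified Lean document; each statement's English description precedes it below -/
import Mathlib

section
/- For all ℓ,s ∈ ℂ, the bilinear form β_{ℓ−s} on the affine Kac–Moody algebra 𝔡̃_{ℓ,s} is symmetric, invariant (β_{ℓ−s}([A,B],C) = β_{ℓ−s}(A,[B,C]) for all A,B,C ∈ 𝔡̃_{ℓ,s}), and non-degenerate (its radical is zero); moreover the β_{ℓ−s}-orthogonal complement of the subspace 𝔡[t,t⁻¹] equals ℂ∂ ⊕ ℂc. -/
open scoped TensorProduct

noncomputable section

variable (L : Type) [LieRing L] [LieAlgebra ℂ L]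

/-- The coadjoint action of `L` on its dual space: `(coad L x f) z = -f ⁅x, z⁆`. -/
def coad : L →ₗ[ℂ] Module.Dual ℂ L →ₗ[ℂ] Module.Dual ℂ L :=
  -(Module.Dual.transpose (R := ℂ) ∘ₗ ((LieAlgebra.ad ℂ L : L →ₗ[ℂ] Module.End ℂ L)))

variable {L}

lemma coad_apply (x : L) (f : Module.Dual ℂ L) (z : L) :
    coad L x f z = -f ⁅x, z⁆ := by
  simp [coad, Module.Dual.transpose_apply]

lemma coad_lie (x y : L) :
    coad L ⁅x, y⁆ = coad L x ∘ₗ coad L y - coad L y ∘ₗ coad L x := by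
  ext f z
  simp only [coad_apply, LinearMap.sub_apply, LinearMap.comp_apply]
  rw [leibniz_lie x y z, map_add]
  ring

variable (L)

/-- The bracket of the cotangent Lie algebra `T*𝔤 = 𝔤 ⋉ 𝔤*`:
`[(x,f),(y,g)] = ([x,y], x•g − y•f)`. -/
def dbkt (a b : L × Module.Dual ℂ L) : L × Module.Dual ℂ L :=
  (⁅a.1, b.1⁆, coad L a.1 b.2 - coad L b.1 a.2)

instance cotLieRing : LieRing (L × Module.Dual ℂ L) :=
  { (inferInstance : AddCommGroup (L × Module.Dual ℂ L)) with
    bracket := dbkt L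
    add_lie := by
      intro a b c
      show dbkt L (a + b) c = dbkt L a c + dbkt L b c
      simp only [dbkt, Prod.fst_add, Prod.snd_add, Prod.mk_add_mk, add_lie, map_add,
        LinearMap.add_apply, Prod.mk.injEq]
      exact ⟨trivial, by abel⟩
    lie_add := by
      intro a b c
      show dbkt L a (b + c) = dbkt L a b + dbkt L a c
      simp only [dbkt, Prod.fst_add, Prod.snd_add, Prod.mk_add_mk, lie_add, map_add,
        LinearMap.add_apply, Prod.mk.injEq]
      exact ⟨trivial, by abel⟩
    lie_self := by
      intro a
      show dbkt L a a = 0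
      simp [dbkt, Prod.ext_iff]
    leibniz_lie := by
      intro a b c
      show dbkt L a (dbkt L b c) = dbkt L (dbkt L a b) c + dbkt L b (dbkt L a c)
      simp only [dbkt, Prod.mk_add_mk, Prod.mk.injEq, coad_lie, map_sub,
        LinearMap.sub_apply, LinearMap.comp_apply]
      exact ⟨leibniz_lie a.1 b.1 c.1, by abel⟩ }

instance cotLieAlgebra : LieAlgebra ℂ (L × Module.Dual ℂ L) :=
  { (inferInstance : Module ℂ (L × Module.Dual ℂ L)) with
    lie_smul := by
      intro t a b
      show dbkt L a (t • b) = t • dbkt L a b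
      simp only [dbkt, Prod.smul_fst, Prod.smul_snd, Prod.smul_mk, lie_smul, map_smul,
        LinearMap.smul_apply, Prod.mk.injEq, smul_sub] }

@[simp] lemma cot_bracket_def (a b : L × Module.Dual ℂ L) :
    ⁅a, b⁆ = (⁅a.1, b.1⁆, coad L a.1 b.2 - coad L b.1 a.2) := rfl

end

noncomputable section LoopModel

/-- The loop algebra `𝔡[t,t⁻¹]` of the cotangent Lie algebra `𝔡 = T*𝔤`, modelled as finitely
supported functions `ℤ → 𝔡` (the value at `n` being the coefficient of `tⁿ`). -/
abbrev LoopD (L : Type) [LieRing L] [LieAlgebra ℂ L] := ℤ →₀ (L × Module.Dual ℂ L)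

variable {L : Type} [LieRing L] [LieAlgebra ℂ L]

/-- The Lie bracket of the loop algebra: `[a⊗tⁿ, b⊗tᵐ] = [a,b]⊗tⁿ⁺ᵐ`. -/
def loopBr (u v : LoopD L) : LoopD L :=
  u.sum fun n a => v.sum fun m b => Finsupp.single (n + m) ⁅a, b⁆

/-- The canonical pairing form `κ₀` on `𝔡`: `κ₀((x,f),(y,g)) = f(y) + g(x)`. -/
def kappa0 (a b : L × Module.Dual ℂ L) : ℂ :=
  a.2 b.1 + b.2 a.1

/-- The form `κ_ℓ = κ₀ + ℓ·κ_𝔤` on `𝔡`, the Killing form of `𝔤` being extended by zero. -/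
def kappaL (ℓ : ℂ) (a b : L × Module.Dual ℂ L) : ℂ :=
  kappa0 a b + ℓ * killingForm ℂ L a.1 b.1

/-- The derivation `∂_ε` of `𝔡[t,t⁻¹]`: `∂_ε((x,f)⊗tⁿ) = n·(0,ψ(x))⊗tⁿ⁻¹`, where
`ψ(x) = κ_𝔤(x,−)`. -/
def depsLoop (u : LoopD L) : LoopD L :=
  u.sum fun n a =>
    Finsupp.single (n - 1) ((n : ℂ) • (((0 : L), killingForm ℂ L a.1) : L × Module.Dual ℂ L))

/-- The derivation `∂_t` of `𝔡[t,t⁻¹]`: `∂_t(a⊗tⁿ) = n·a⊗tⁿ⁻¹`. -/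
def dtLoop (u : LoopD L) : LoopD L :=
  u.sum fun n a => Finsupp.single (n - 1) ((n : ℂ) • a)

/-- `∂_s = ∂_t + s·∂_ε`. -/
def dsLoop (s : ℂ) (u : LoopD L) : LoopD L :=
  dtLoop u + s • depsLoop u

/-- The 2-cocycle `ω_ℓ(a⊗tⁿ, b⊗tᵐ) = n·δ_{n+m,0}·κ_ℓ(a,b)` on `𝔡[t,t⁻¹]`. -/
def omegaL (ℓ : ℂ) (u v : LoopD L) : ℂ :=
  u.sum fun n a => (n : ℂ) * kappaL ℓ a (v (-n))

/-- The bracket of the central extension `𝔡[t,t⁻¹] ⊕ ℂc_ℓ`. -/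
def extBr (ℓ : ℂ) (A B : LoopD L × ℂ) : LoopD L × ℂ :=
  (loopBr A.1 B.1, omegaL ℓ A.1 B.1)

/-- The extension of `∂_ε` to `𝔡[t,t⁻¹] ⊕ ℂc_ℓ` acting by zero on `c_ℓ`. -/
def extDeps (A : LoopD L × ℂ) : LoopD L × ℂ :=
  (depsLoop A.1, 0)

end LoopModel

noncomputable section TdModel

variable {L : Type} [LieRing L] [LieAlgebra ℂ L]

/-- The affine Kac–Moody algebra `𝔡̃_{ℓ,s} = ℂ∂ ⊕ 𝔡[t,t⁻¹] ⊕ ℂc` (first coordinate: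
coefficient of `∂`, last coordinate: coefficient of `c`). -/
abbrev TdD (L : Type) [LieRing L] [LieAlgebra ℂ L] := ℂ × LoopD L × ℂ

/-- The Lie bracket of `𝔡̃_{ℓ,s}`: `c` is central, `[∂,u] = ∂_s(u)` and
`[u,v] = [u,v]_loop + ω_ℓ(u,v)·c` for `u, v ∈ 𝔡[t,t⁻¹]`. -/
def tdBr (ℓ s : ℂ) (A B : TdD L) : TdD L :=
  (0, A.1 • dsLoop s B.2.1 - B.1 • dsLoop s A.2.1 + loopBr A.2.1 B.2.1,
    omegaL ℓ A.2.1 B.2.1)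

/-- The bilinear form `β_r` on `𝔡̃` determined by `β_r(a⊗tⁿ, b⊗tᵐ) = δ_{n+m,−1}·κ_r(a,b)`,
`β_r(c,∂) = β_r(∂,c) = 1`, `β_r(∂,∂) = β_r(c,c) = 0` and `β_r(𝔡[t,t⁻¹], ℂ∂⊕ℂc) = 0`. -/
def betaForm (r : ℂ) (A B : TdD L) : ℂ :=
  A.1 * B.2.2 + A.2.2 * B.1 + A.2.1.sum fun n a => kappaL r a (B.2.1 (-n - 1))

end TdModel

/-!
On `𝔡`, the form `κ_r` is symmetric and invariant (`κ₀` is the canonical pairing of `𝔤` with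
`𝔤*`, `κ_𝔤` the Killing form) and non-degenerate (already `κ₀` is). On loops it induces the
residue pairing `(u, v) ↦ Res κ_r(u, v)`, which inherits all three properties, and `β_r` adds
the hyperbolic pairing of `∂` with `c`. The one computation is `β_{ℓ-s}(∂_s u, v) = ω_ℓ(u, v)`:
the `s·∂_ε` part of `∂_s` contributes `s·κ_𝔤`, which restores `κ_ℓ` from `κ_{ℓ-s}`, and
`ω_ℓ(u, v) = Res κ_ℓ(∂_t u, v)` is skew since `∂_t` is skew for the residue pairing.
-/

noncomputable section

variable {L : Type} [LieRing L] [LieAlgebra ℂ L]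

lemma kappaL_comm (r : ℂ) (a b : L × Module.Dual ℂ L) : kappaL r a b = kappaL r b a := by
  simp only [kappaL, kappa0, LieModule.traceForm_comm ℂ L L a.1 b.1]
  ring

lemma kappaL_lie (r : ℂ) (a b c : L × Module.Dual ℂ L) :
    kappaL r ⁅a, b⁆ c = kappaL r a ⁅b, c⁆ := by
  simp only [kappaL, kappa0, cot_bracket_def, LinearMap.sub_apply, coad_apply,
    LieModule.traceForm_apply_lie_apply]
  rw [← lie_skew c.1 a.1, ← lie_skew b.1 a.1, map_neg, map_neg]
  ring

lemma eq_zero_of_forall_kappaL_eq_zero (r : ℂ) (a : L × Module.Dual ℂ L)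
    (h : ∀ b, kappaL r a b = 0) : a = 0 := by
  have h₁ : a.1 = 0 := (Module.forall_dual_apply_eq_zero_iff ℂ a.1).1 fun f => by
    simpa [kappaL, kappa0] using h (0, f)
  have h₂ : a.2 = 0 := LinearMap.ext fun y => by
    simpa [kappaL, kappa0, h₁] using h (y, 0)
  exact Prod.ext h₁ h₂

lemma kappaL_sub_add_killingForm (ℓ s : ℂ) (a b : L × Module.Dual ℂ L) :
    kappaL (ℓ - s) a b + s * kappaL (ℓ - s) ((0 : L), killingForm ℂ L a.1) b = kappaL ℓ a b := by
  simp only [kappaL, kappa0, map_zero, LinearMap.zero_apply]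
  ring

def kappaLBilin (r : ℂ) : LinearMap.BilinForm ℂ (L × Module.Dual ℂ L) :=
  LinearMap.mk₂ ℂ (kappaL r)
    (fun _ _ _ => by simp only [kappaL, kappa0, Prod.fst_add, Prod.snd_add, map_add,
      LinearMap.add_apply]; ring)
    (fun _ _ _ => by simp only [kappaL, kappa0, Prod.smul_fst, Prod.smul_snd, map_smul,
      LinearMap.smul_apply, smul_eq_mul]; ring)
    (fun _ _ _ => by simp only [kappaL, kappa0, Prod.fst_add, Prod.snd_add, map_add,
      LinearMap.add_apply]; ring)
    (fun _ _ _ => by simp only [kappaL, kappa0, Prod.smul_fst, Prod.smul_snd, map_smul,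
      LinearMap.smul_apply, smul_eq_mul]; ring)

@[simp] lemma kappaLBilin_apply (r : ℂ) (a b : L × Module.Dual ℂ L) :
    kappaLBilin r a b = kappaL r a b := rfl

@[simp] lemma kappaL_zero_right (r : ℂ) (a : L × Module.Dual ℂ L) : kappaL r a 0 = 0 :=
  map_zero (kappaLBilin r a)

lemma kappaL_smul_left (r t : ℂ) (a b : L × Module.Dual ℂ L) :
    kappaL r (t • a) b = t * kappaL r a b :=
  LinearMap.map_smul₂ (kappaLBilin r) t a b

def loopPairing (r : ℂ) : LoopD L →ₗ[ℂ] LoopD L →ₗ[ℂ] ℂ :=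
  Finsupp.lsum ℂ fun n => (kappaLBilin r).compl₂ (Finsupp.lapply (-n - 1))

lemma loopPairing_apply (r : ℂ) (u v : LoopD L) :
    loopPairing r u v = u.sum fun n a => kappaL r a (v (-n - 1)) := by
  simp [loopPairing, Finsupp.lsum_apply, LinearMap.finsupp_sum_apply]

lemma betaForm_eq_loopPairing (r : ℂ) (A B : TdD L) :
    betaForm r A B = A.1 * B.2.2 + A.2.2 * B.1 + loopPairing r A.2.1 B.2.1 := by
  rw [betaForm, loopPairing_apply]

lemma loopPairing_single_left (r : ℂ) (n : ℤ) (a : L × Module.Dual ℂ L) (v : LoopD L) :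
    loopPairing r (Finsupp.single n a) v = kappaL r a (v (-n - 1)) := by
  simp [loopPairing]

lemma loopPairing_comm (r : ℂ) (u v : LoopD L) : loopPairing r u v = loopPairing r v u := by
  induction u using Finsupp.induction_linear with
  | zero => simp
  | add f g hf hg => simp only [map_add, LinearMap.add_apply, hf, hg]
  | single n a =>
    induction v using Finsupp.induction_linear with
    | zero => simp
    | add f g hf hg => simp only [map_add, LinearMap.add_apply, hf, hg]
    | single m b =>
      simp only [loopPairing_single_left, Finsupp.single_apply]
      by_cases h : m = -n - 1
      · rw [if_pos h, if_pos (by omega), kappaL_comm]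
      · rw [if_neg h, if_neg (by omega), kappaL_zero_right, kappaL_zero_right]

lemma loopPairing_single_right (r : ℂ) (u : LoopD L) (k : ℤ) (b : L × Module.Dual ℂ L) :
    loopPairing r u (Finsupp.single k b) = kappaL r (u (-k - 1)) b := by
  rw [loopPairing_comm, loopPairing_single_left, kappaL_comm]

lemma eq_zero_of_forall_loopPairing_eq_zero (r : ℂ) (u : LoopD L)
    (h : ∀ v, loopPairing r u v = 0) : u = 0 := by
  exact Finsupp.ext fun n => eq_zero_of_forall_kappaL_eq_zero r (u n) fun b => by
    simpa [loopPairing_single_right] using h (Finsupp.single (-n - 1) b)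

lemma loopBr_add_left (u u' v : LoopD L) : loopBr (u + u') v = loopBr u v + loopBr u' v :=
  Finsupp.sum_add_index' (fun _ => by simp) fun _ _ _ => by
    simp only [add_lie, Finsupp.single_add, Finsupp.sum_add]

lemma loopBr_add_right (u v v' : LoopD L) : loopBr u (v + v') = loopBr u v + loopBr u v' := by
  simp only [loopBr, ← Finsupp.sum_add]
  exact Finsupp.sum_congr fun _ _ => Finsupp.sum_add_index' (fun _ => by simp)
    fun _ _ _ => by rw [lie_add, Finsupp.single_add]

lemma loopBr_single_single (n m : ℤ) (a b : L × Module.Dual ℂ L) :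
    loopBr (Finsupp.single n a) (Finsupp.single m b) = Finsupp.single (n + m) ⁅a, b⁆ := by
  simp [loopBr]

lemma loopPairing_loopBr (r : ℂ) (u v w : LoopD L) :
    loopPairing r (loopBr u v) w = loopPairing r u (loopBr v w) := by
  induction u using Finsupp.induction_linear with
  | zero => simp [loopBr]
  | add f g hf hg => simp only [loopBr_add_left, map_add, LinearMap.add_apply, hf, hg]
  | single n a =>
    induction v using Finsupp.induction_linear with
    | zero => simp [loopBr]
    | add f g hf hg => simp only [loopBr_add_left, loopBr_add_right, map_add,
        LinearMap.add_apply, hf, hg]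
    | single m b =>
      induction w using Finsupp.induction_linear with
      | zero => simp [loopBr]
      | add f g hf hg => simp only [loopBr_add_right, map_add, hf, hg]
      | single k c =>
        simp only [loopBr_single_single, loopPairing_single_left, Finsupp.single_apply]
        by_cases h : k = -(n + m) - 1
        · rw [if_pos h, if_pos (by omega), kappaL_lie]
        · rw [if_neg h, if_neg (by omega), kappaL_zero_right, kappaL_zero_right]

lemma dtLoop_add (u v : LoopD L) : dtLoop (u + v) = dtLoop u + dtLoop v :=
  Finsupp.sum_add_index' (fun _ => by simp) fun _ _ _ => by rw [smul_add, Finsupp.single_add]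

lemma dtLoop_single (n : ℤ) (a : L × Module.Dual ℂ L) :
    dtLoop (Finsupp.single n a) = Finsupp.single (n - 1) ((n : ℂ) • a) :=
  Finsupp.sum_single_index (by simp)

lemma omegaL_eq_loopPairing_dtLoop (r : ℂ) (u v : LoopD L) :
    omegaL r u v = loopPairing r (dtLoop u) v := by
  rw [dtLoop, map_finsuppSum, LinearMap.finsupp_sum_apply]
  refine Finsupp.sum_congr fun n _ => ?_
  rw [loopPairing_single_left, kappaL_smul_left, show -(n - 1) - 1 = -n by ring]

-- `∂_t` is skew for the residue pairing: the residue of a derivative vanishes.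
lemma loopPairing_dtLoop_left (r : ℂ) (u v : LoopD L) :
    loopPairing r (dtLoop u) v = -loopPairing r u (dtLoop v) := by
  induction u using Finsupp.induction_linear with
  | zero => simp [dtLoop]
  | add f g hf hg => rw [dtLoop_add, map_add, map_add, LinearMap.add_apply, LinearMap.add_apply,
      hf, hg, neg_add]
  | single n a =>
    induction v using Finsupp.induction_linear with
    | zero => simp [dtLoop]
    | add f g hf hg => rw [dtLoop_add, map_add, map_add, hf, hg, neg_add]
    | single m b =>
      simp only [dtLoop_single, loopPairing_single_left, Finsupp.single_apply]
      by_cases h : m = -n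
      · subst h
        rw [if_pos (by omega), if_pos (by omega), kappaL_smul_left, kappaL_comm r a (_ • b), kappaL_smul_left, kappaL_comm]
        push_cast
        ring
      · rw [if_neg (by omega), if_neg (by omega), kappaL_zero_right, kappaL_zero_right, neg_zero]

lemma loopPairing_dsLoop_left (ℓ s : ℂ) (u v : LoopD L) :
    loopPairing (ℓ - s) (dsLoop s u) v = omegaL ℓ u v := by
  rw [dsLoop, map_add, map_smul, LinearMap.add_apply, LinearMap.smul_apply, dtLoop, depsLoop,
    map_finsuppSum, map_finsuppSum, LinearMap.finsupp_sum_apply, LinearMap.finsupp_sum_apply,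
    omegaL, Finsupp.smul_sum, ← Finsupp.sum_add]
  refine Finsupp.sum_congr fun n _ => ?_
  rw [loopPairing_single_left, loopPairing_single_left, kappaL_smul_left, kappaL_smul_left,
    show -(n - 1) - 1 = -n by ring, smul_eq_mul, ← kappaL_sub_add_killingForm ℓ s]
  ring

lemma loopPairing_dsLoop_right (ℓ s : ℂ) (u v : LoopD L) :
    loopPairing (ℓ - s) u (dsLoop s v) = -omegaL ℓ u v := by
  rw [loopPairing_comm, loopPairing_dsLoop_left, omegaL_eq_loopPairing_dtLoop,
    loopPairing_dtLoop_left, loopPairing_comm, ← omegaL_eq_loopPairing_dtLoop]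

lemma betaForm_comm (r : ℂ) (A B : TdD L) : betaForm r A B = betaForm r B A := by
  rw [betaForm_eq_loopPairing, betaForm_eq_loopPairing, loopPairing_comm]
  ring

lemma betaForm_tdBr_invariant (ℓ s : ℂ) (A B C : TdD L) :
    betaForm (ℓ - s) (tdBr ℓ s A B) C = betaForm (ℓ - s) A (tdBr ℓ s B C) := by
  simp only [betaForm_eq_loopPairing, tdBr, map_add, map_sub, map_smul, LinearMap.add_apply,
    LinearMap.sub_apply, LinearMap.smul_apply, smul_eq_mul, loopPairing_dsLoop_left,
    loopPairing_dsLoop_right, loopPairing_loopBr]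
  ring

lemma betaForm_loop_right (r : ℂ) (A : TdD L) (u : LoopD L) :
    betaForm r A ((0 : ℂ), u, (0 : ℂ)) = loopPairing r A.2.1 u := by
  simp [betaForm_eq_loopPairing]

lemma eq_zero_of_forall_betaForm_eq_zero (r : ℂ) (A : TdD L) (h : ∀ B, betaForm r A B = 0) :
    A = 0 := by
  obtain ⟨d, u, c⟩ := A
  have hd : d = 0 := by simpa [betaForm_eq_loopPairing] using h (0, 0, 1)
  have hc : c = 0 := by simpa [betaForm_eq_loopPairing] using h (1, 0, 0)
  have hu : u = 0 := eq_zero_of_forall_loopPairing_eq_zero r u fun v => by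
    simpa [betaForm_loop_right] using h (0, v, 0)
  simp [hd, hu, hc]

end

theorem betaForm_symm_invariant_nondegenerate_general (L : Type) [LieRing L] [LieAlgebra ℂ L]
    (ℓ s : ℂ) :
    (∀ A B : TdD L, betaForm (ℓ - s) A B = betaForm (ℓ - s) B A) ∧
    (∀ A B C : TdD L,
      betaForm (ℓ - s) (tdBr ℓ s A B) C = betaForm (ℓ - s) A (tdBr ℓ s B C)) ∧
    (∀ A : TdD L, (∀ B : TdD L, betaForm (ℓ - s) A B = 0) → A = 0) ∧
    (∀ A : TdD L,
      (∀ u : LoopD L, betaForm (ℓ - s) A ((0 : ℂ), u, (0 : ℂ)) = 0) ↔ A.2.1 = 0) := by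
  refine ⟨betaForm_comm _, betaForm_tdBr_invariant ℓ s, eq_zero_of_forall_betaForm_eq_zero _,
    fun A => ?_⟩
  simp only [betaForm_loop_right]
  exact ⟨eq_zero_of_forall_loopPairing_eq_zero _ _,
    fun h u => by rw [h, map_zero, LinearMap.zero_apply]⟩

/-- For all `ℓ, s ∈ ℂ`, the bilinear form `β_{ℓ−s}` on the affine Kac–Moody
algebra `𝔡̃_{ℓ,s}` is symmetric, invariant and non-degenerate, and the `β_{ℓ−s}`-orthogonal
complement of `𝔡[t,t⁻¹]` is `ℂ∂ ⊕ ℂc`. -/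
theorem betaForm_symm_invariant_nondegenerate (L : Type) [LieRing L] [LieAlgebra ℂ L]
    [FiniteDimensional ℂ L] (ℓ s : ℂ) :
    (∀ A B : TdD L, betaForm (ℓ - s) A B = betaForm (ℓ - s) B A) ∧
    (∀ A B C : TdD L,
      betaForm (ℓ - s) (tdBr ℓ s A B) C = betaForm (ℓ - s) A (tdBr ℓ s B C)) ∧
    (∀ A : TdD L, (∀ B : TdD L, betaForm (ℓ - s) A B = 0) → A = 0) ∧
    (∀ A : TdD L,
      (∀ u : LoopD L, betaForm (ℓ - s) A ((0 : ℂ), u, (0 : ℂ)) = 0) ↔ A.2.1 = 0) :=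
  betaForm_symm_invariant_nondegenerate_general L ℓ s
end

section
/- (i) M₀ = z·M₁ + φ(S), i.e. the map M₁ ⊕ S → M₀, (B,A) ↦ z·B + φ(A), is surjective; and (ii) for A ∈ S, φ(A) ∈ z·M₁ if and only if A ∈ K. (This computes the Čech cohomology of the sheaf 𝒪(−1) on ℙ¹ relative to the marked points t_i: H¹ vanishes and H⁰ of the outside sections is identified with K.) -/
set_option synthInstance.maxHeartbeats 1000000
set_option maxHeartbeats 1000000

noncomputable section

open Polynomial

variable (I : Type) [Fintype I] [DecidableEq I]

/-- `R = ℂ[(t_i)_{i ∈ I}]`. -/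
abbrev Rbase := MvPolynomial I ℂ

/-- `R[t]`. -/
abbrev Rt (I : Type) := Polynomial (Rbase I)

/-- `Π = Π_{i∈I} (t − t_i) ∈ R[t]`. -/
def Pprod : Rt I := ∏ i : I, (X - C (MvPolynomial.X i))

/-- `S = R[t][Π⁻¹]`. -/
abbrev Sloc := Localization.Away (Pprod I)

/-- The `R`-submodule `K ⊆ S` spanned by the elements `tⁿ·Π_{i∈I}(t−t_i)^{−k_i}` over all
tuples `(k_i) ∈ ℕ^I` and all `n` with `0 ≤ n < Σ_i k_i`. -/
def Ksub : Submodule (Rbase I) (Sloc I) :=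
  Submodule.span (Rbase I)
    {s | ∃ (k : I → ℕ) (n : ℕ), n < ∑ i : I, k i ∧
      s = algebraMap (Rt I) (Sloc I) (X ^ n) *
        ∏ i : I, (Ring.inverse (algebraMap (Rt I) (Sloc I) (X - C (MvPolynomial.X i)))) ^ k i}

/-- `R[z]`. -/
abbrev Rz (I : Type) := Polynomial (Rbase I)

/-- `Q = Π_{i∈I} (1 − t_i·z) ∈ R[z]`. -/
def Qprod : Rz I := ∏ i : I, (1 - C (MvPolynomial.X i) * X)

/-- `M₁ = R[z][Π_{i∈I}(1−t_i z)⁻¹]`. -/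
abbrev M1 := Localization.Away (Qprod I)

/-- `M₀ = R[z,z⁻¹][Π_{i∈I}(1−t_i z)⁻¹]`, realised as the localization of `R[z]` at `z·Q`. -/
abbrev M0 := Localization.Away ((X : Rz I) * Qprod I)

lemma Qprod_unit : IsUnit (algebraMap (Rz I) (M0 I) (Qprod I)) :=
  IsLocalization.Away.isUnit_of_dvd (x := (X : Rz I) * Qprod I) (dvd_mul_left _ _)

lemma zX_unit : IsUnit (algebraMap (Rz I) (M0 I) (X : Rz I)) :=
  IsLocalization.Away.isUnit_of_dvd (x := (X : Rz I) * Qprod I) (dvd_mul_right _ _)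

/-- The canonical inclusion `ψ : M₁ → M₀`. -/
def psiM : M1 I →+* M0 I :=
  Localization.awayLift (algebraMap (Rz I) (M0 I)) (Qprod I) (Qprod_unit I)

/-- The ring homomorphism `R[t] → M₀` determined by `t ↦ z⁻¹` (and the identity on `R`). -/
def fRing : Rt I →+* M0 I :=
  Polynomial.eval₂RingHom ((algebraMap (Rz I) (M0 I)).comp (Polynomial.C : Rbase I →+* Rz I))
    (Ring.inverse (algebraMap (Rz I) (M0 I) (X : Rz I)))

lemma fRing_Pprod_unit : IsUnit (fRing I (Pprod I)) := by
  rw [Pprod, map_prod]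
  refine Finset.prod_induction _ IsUnit (fun a b ha hb => ha.mul hb) isUnit_one ?_
  intro i _
  simp only [fRing, coe_eval₂RingHom, eval₂_sub, eval₂_X, eval₂_C]
  have key : Ring.inverse (algebraMap (Rz I) (M0 I) (X : Rz I)) -
      (algebraMap (Rz I) (M0 I)).comp (Polynomial.C : Rbase I →+* Rz I) (MvPolynomial.X i) =
      Ring.inverse (algebraMap (Rz I) (M0 I) (X : Rz I)) *
        algebraMap (Rz I) (M0 I) (1 - C (MvPolynomial.X i) * X) := by
    rw [map_sub, map_one, map_mul, mul_sub, mul_one, RingHom.comp_apply]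
    congr 1
    rw [mul_comm (algebraMap (Rz I) (M0 I) (C (MvPolynomial.X i))), ← mul_assoc,
      Ring.inverse_mul_cancel _ (zX_unit I), one_mul]
  rw [key]
  refine IsUnit.mul ((zX_unit I).ringInverse) ?_
  exact IsLocalization.Away.isUnit_of_dvd (x := (X : Rz I) * Qprod I)
    (dvd_mul_of_dvd_right (Finset.dvd_prod_of_mem _ (Finset.mem_univ i)) _)

/-- The ring homomorphism `φ : S → M₀` determined by `φ(t) = z⁻¹`. -/
def phiM : Sloc I →+* M0 I :=
  Localization.awayLift (fRing I) (Pprod I) (fRing_Pprod_unit I)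

/-!
All computations take place in the fraction field `𝔽` of `R[z]`, into which `M₀` embeds.
There `ψ` is the identity on `R[z]`, `φ` is evaluation at `z⁻¹`, and
`φ(t - tᵢ) = z⁻¹ (1 - tᵢ z)`, so `φ(Π) = z^{-d} Q` with `d = |I|` and `Q = ∏ᵢ (1 - tᵢ z)`.

(i) An element of `M₀` is `p / (z Q)ⁿ`. Writing `p = r + z^{n+1} h` with `deg r ≤ n`, the
second part is `z · h / Qⁿ ∈ z·M₁` and the first is `φ(t^{dn} r̃ / Πⁿ)`, where
`r̃(t) = tⁿ r(1/t)` is the reflection of `r`.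

(ii) `φ(tⁿ ∏ᵢ (t - tᵢ)^{-kᵢ}) = z^{Σk - n} ∏ᵢ (1 - tᵢ z)^{-kᵢ}`, which lies in `z·M₁` when
`n < Σk`. Conversely, if `φ(P / Πᵏ) = z H / Qᵐ`, clearing denominators gives
`z^{dk} · rev P · Qᵐ = z^{deg P + 1} · H · Qᵏ` in `R[z]`. Since `rev P` and `Q` do not vanish
at `z = 0`, comparing orders of vanishing there gives `deg P < dk`, so `P / Πᵏ` is a
combination of generators of `K` with all `kᵢ = k`.
-/

theorem map_ringInverse_of_isUnit {M G : Type*} [MonoidWithZero M] [GroupWithZero G]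
    {F : Type*} [FunLike F M G] [MonoidHomClass F M G] (f : F) {a : M} (ha : IsUnit a) :
    f (Ring.inverse a) = (f a)⁻¹ := by
  obtain ⟨u, rfl⟩ := ha
  rw [Ring.inverse_unit, map_units_inv]

theorem IsLocalization.Away.exists_eq_mul_inverse_pow {R S : Type*} [CommSemiring R]
    [CommSemiring S] [Algebra R S] (x : R) [IsLocalization.Away x S] (s : S) :
    ∃ (n : ℕ) (a : R), s = algebraMap R S a * Ring.inverse (algebraMap R S x) ^ n := by
  obtain ⟨n, a, h⟩ := IsLocalization.Away.surj x s
  refine ⟨n, a, ?_⟩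
  rw [← h, mul_assoc, ← mul_pow,
    Ring.mul_inverse_cancel _ (IsLocalization.Away.algebraMap_isUnit x), one_pow, mul_one]

namespace Polynomial

theorem aeval_algebraMap_X {R A : Type*} [CommSemiring R] [CommSemiring A] [Algebra R A]
    [Algebra R[X] A] [IsScalarTower R R[X] A] (p : R[X]) :
    aeval (algebraMap R[X] A X) p = algebraMap R[X] A p := by
  rw [← IsScalarTower.coe_toAlgHom' R R[X] A, aeval_algHom_apply, aeval_X_left_apply]

theorem aeval_inv_reflect_mul_pow {R K : Type*} [CommSemiring R] [Field K] [Algebra R K] {x : K}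
    (hx : x ≠ 0) {p : R[X]} {n : ℕ} (hp : p.natDegree ≤ n) :
    aeval x⁻¹ (reflect n p) * x ^ n = aeval x p := by
  let := invertibleOfNonzero hx
  simpa only [aeval_def, invOf_eq_inv] using eval₂_reflect_mul_pow (algebraMap R K) x n p hp

theorem algebraMap_fractionRing_X_ne_zero {R : Type*} [CommRing R] [IsDomain R] :
    algebraMap R[X] (FractionRing R[X]) X ≠ 0 :=
  (map_ne_zero_iff _ (IsFractionRing.injective R[X] _)).mpr X_ne_zero

theorem exists_eq_add_X_pow_mul {R : Type*} [CommRing R] [Nontrivial R] (p : R[X]) (n : ℕ) :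
    ∃ r h : R[X], r.natDegree ≤ n ∧ p = r + X ^ (n + 1) * h := by
  refine ⟨p %ₘ X ^ (n + 1), p /ₘ X ^ (n + 1), ?_, (modByMonic_add_div p _).symm⟩
  have := natDegree_modByMonic_lt p (monic_X_pow (n + 1)) fun h => by
    simpa using congrArg natDegree h
  rwa [natDegree_X_pow, Nat.lt_succ_iff] at this

theorem natDegree_lt_of_X_pow_mul_reverse_mul_eq {R : Type*} [CommRing R] [IsDomain R]
    {P H U V : R[X]} {a : ℕ} (hP : P ≠ 0) (hU : U.coeff 0 ≠ 0) (hV : V ≠ 0)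
    (h : X ^ a * P.reverse * U = X ^ (P.natDegree + 1) * H * V) : P.natDegree < a := by
  have hU0 : U ≠ 0 := fun h0 => hU (by rw [h0, coeff_zero])
  have hrev : P.reverse ≠ 0 := fun h0 => hP (reverse_eq_zero.mp h0)
  have hH : H ≠ 0 := by
    rintro rfl
    rw [mul_zero, zero_mul] at h
    exact mul_ne_zero (mul_ne_zero (pow_ne_zero _ X_ne_zero) hrev) hU0 h
  have htrail := congrArg natTrailingDegree h
  rw [natTrailingDegree_mul (mul_ne_zero (pow_ne_zero _ X_ne_zero) hrev) hU0,
    natTrailingDegree_mul (pow_ne_zero _ X_ne_zero) hrev,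
    natTrailingDegree_mul (mul_ne_zero (pow_ne_zero _ X_ne_zero) hH) hV,
    natTrailingDegree_mul (pow_ne_zero _ X_ne_zero) hH, natTrailingDegree_X_pow,
    natTrailingDegree_X_pow, natTrailingDegree_reverse,
    natTrailingDegree_eq_zero.mpr (Or.inr hU)] at htrail
  omega

theorem aeval_reverse {R K : Type*} [CommSemiring R] [Field K] [Algebra R K] {x : K}
    (hx : x ≠ 0) (p : R[X]) : aeval x p.reverse = aeval x⁻¹ p * x ^ p.natDegree := by
  let := invertibleOfNonzero (inv_ne_zero hx)
  have h := eval₂_reverse_mul_pow (algebraMap R K) x⁻¹ p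
  rw [invOf_eq_inv, inv_inv, ← aeval_def, ← aeval_def] at h
  rw [← h, mul_assoc, ← mul_pow, inv_mul_cancel₀ hx, one_pow, mul_one]

theorem aeval_inv_X_sub_C {R K : Type*} [CommRing R] [Field K] [Algebra R K] {x : K}
    (hx : x ≠ 0) (a : R) : aeval x⁻¹ (X - C a) = x⁻¹ * aeval x (1 - C a * X) := by
  simp only [map_sub, map_mul, aeval_X, aeval_C, map_one]
  field_simp

end Polynomial

local notation "𝔽" => FractionRing (Rz I)
local notation "ζ" => algebraMap (Rz I) 𝔽 X

section

omit [DecidableEq I]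

theorem Qprod_eval_zero : (Qprod I).eval 0 = 1 := by
  simp [Qprod, eval_prod]

theorem Qprod_ne_zero : Qprod I ≠ 0 := fun h => by
  simpa [h] using Qprod_eval_zero I

theorem algebraMap_Qprod_ne_zero : algebraMap (Rz I) 𝔽 (Qprod I) ≠ 0 :=
  (map_ne_zero_iff _ (IsFractionRing.injective (Rz I) 𝔽)).mpr (Qprod_ne_zero I)

theorem isUnit_algebraMap_X_mul_Qprod : IsUnit (algebraMap (Rz I) 𝔽 (X * Qprod I)) := by
  rw [isUnit_iff_ne_zero, ne_eq, IsFractionRing.to_map_eq_zero_iff]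
  exact mul_ne_zero X_ne_zero (Qprod_ne_zero I)

def M0.toFrac : M0 I →+* 𝔽 :=
  Localization.awayLift (algebraMap (Rz I) 𝔽) _ (isUnit_algebraMap_X_mul_Qprod I)

theorem M0.toFrac_algebraMap (p : Rz I) :
    M0.toFrac I (algebraMap (Rz I) (M0 I) p) = algebraMap (Rz I) 𝔽 p :=
  IsLocalization.Away.lift_eq _ (isUnit_algebraMap_X_mul_Qprod I) p

theorem M0.toFrac_injective : Function.Injective (M0.toFrac I) := by
  rw [IsLocalization.injective_iff_map_algebraMap_eq (Submonoid.powers (X * Qprod I))]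
  intro p q
  rw [M0.toFrac_algebraMap, M0.toFrac_algebraMap, (IsFractionRing.injective (Rz I) 𝔽).eq_iff,
    (IsLocalization.injective (M0 I) (powers_le_nonZeroDivisors_of_noZeroDivisors
      (mul_ne_zero X_ne_zero (Qprod_ne_zero I)))).eq_iff]

theorem M0.toFrac_inverse_algebraMap_X_mul_Qprod :
    M0.toFrac I (Ring.inverse (algebraMap (Rz I) (M0 I) (X * Qprod I))) =
      (algebraMap (Rz I) 𝔽 (X * Qprod I))⁻¹ := by
  rw [map_ringInverse_of_isUnit _ (IsLocalization.Away.algebraMap_isUnit _),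
    M0.toFrac_algebraMap]

theorem isUnit_algebraMap_X_sub_C (i : I) :
    IsUnit (algebraMap (Rt I) (Sloc I) (X - C (MvPolynomial.X i))) :=
  IsLocalization.Away.isUnit_of_dvd (x := Pprod I)
    (Finset.dvd_prod_of_mem (fun i => X - C (MvPolynomial.X i)) (Finset.mem_univ i))

theorem isUnit_algebraMap_one_sub_C_mul_X (i : I) :
    IsUnit (algebraMap (Rz I) (M1 I) (1 - C (MvPolynomial.X i) * X)) :=
  IsLocalization.Away.isUnit_of_dvd (x := Qprod I)
    (Finset.dvd_prod_of_mem (fun i => 1 - C (MvPolynomial.X i) * X) (Finset.mem_univ i))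

theorem aeval_inv_Pprod :
    aeval ζ⁻¹ (Pprod I) = ζ⁻¹ ^ Fintype.card I * algebraMap (Rz I) 𝔽 (Qprod I) := by
  rw [Pprod, Qprod, map_prod, map_prod, ← Finset.card_univ, ← Finset.prod_const,
    ← Finset.prod_mul_distrib]
  refine Finset.prod_congr rfl fun i _ => ?_
  rw [aeval_inv_X_sub_C algebraMap_fractionRing_X_ne_zero, aeval_algebraMap_X]

theorem inverse_algebraMap_Pprod :
    Ring.inverse (algebraMap (Rt I) (Sloc I) (Pprod I)) =
      ∏ i : I, Ring.inverse (algebraMap (Rt I) (Sloc I) (X - C (MvPolynomial.X i))) := by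
  have : algebraMap (Rt I) (Sloc I) (Pprod I) =
      ∏ i : I, algebraMap (Rt I) (Sloc I) (X - C (MvPolynomial.X i)) := map_prod _ _ _
  rw [this]
  exact map_prod (MonoidWithZero.inverse (M := Sloc I)) _ _

theorem algebraMap_mul_inverse_Pprod_pow_mem_Ksub (P : Rt I) (k : ℕ)
    (hP : P.degree < ↑(Fintype.card I * k)) :
    algebraMap (Rt I) (Sloc I) P * Ring.inverse (algebraMap (Rt I) (Sloc I) (Pprod I)) ^ k ∈
      Ksub I := by
  rw [as_sum_support_C_mul_X_pow P, map_sum, Finset.sum_mul]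
  refine Submodule.sum_mem _ fun n hn => ?_
  rw [map_mul, mul_assoc, C_eq_algebraMap, ← IsScalarTower.algebraMap_apply, ← Algebra.smul_def]
  refine Submodule.smul_mem _ _ (Submodule.subset_span ⟨fun _ => k, n, ?_, ?_⟩)
  · have := (le_degree_of_ne_zero (mem_support_iff.mp hn)).trans_lt hP
    rw [Finset.sum_const, Finset.card_univ, smul_eq_mul]
    exact_mod_cast this
  · rw [inverse_algebraMap_Pprod, Finset.prod_pow]

end

theorem psiM_algebraMap (p : Rz I) :
    psiM I (algebraMap (Rz I) (M1 I) p) = algebraMap (Rz I) (M0 I) p :=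
  IsLocalization.Away.lift_eq _ (Qprod_unit I) p

theorem phiM_algebraMap (p : Rt I) : phiM I (algebraMap (Rt I) (Sloc I) p) = fRing I p :=
  IsLocalization.Away.lift_eq _ (fRing_Pprod_unit I) p

theorem phiM_smul (r : Rbase I) (x : Sloc I) : phiM I (r • x) = r • phiM I x := by
  rw [Algebra.smul_def, Algebra.smul_def, map_mul,
    IsScalarTower.algebraMap_apply (Rbase I) (Rt I), phiM_algebraMap,
    IsScalarTower.algebraMap_apply (Rbase I) (Rz I) (M0 I)]
  simp [fRing]

theorem psiM_smul (r : Rbase I) (x : M1 I) : psiM I (r • x) = r • psiM I x := by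
  rw [Algebra.smul_def, Algebra.smul_def, map_mul,
    IsScalarTower.algebraMap_apply (Rbase I) (Rz I), psiM_algebraMap,
    ← IsScalarTower.algebraMap_apply]

theorem M0.toFrac_psiM_algebraMap (p : Rz I) :
    M0.toFrac I (psiM I (algebraMap (Rz I) (M1 I) p)) = algebraMap (Rz I) 𝔽 p := by
  rw [psiM_algebraMap, M0.toFrac_algebraMap]

theorem M0.toFrac_psiM_inverse {p : Rz I} (hp : IsUnit (algebraMap (Rz I) (M1 I) p)) :
    M0.toFrac I (psiM I (Ring.inverse (algebraMap (Rz I) (M1 I) p))) =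
      (algebraMap (Rz I) 𝔽 p)⁻¹ := by
  simpa only [RingHom.comp_apply, M0.toFrac_psiM_algebraMap] using
    map_ringInverse_of_isUnit ((M0.toFrac I).comp (psiM I)) hp

theorem M0.toFrac_phiM_algebraMap (p : Rt I) :
    M0.toFrac I (phiM I (algebraMap (Rt I) (Sloc I) p)) = aeval ζ⁻¹ p := by
  rw [phiM_algebraMap, fRing, coe_eval₂RingHom, hom_eval₂, aeval_def,
    map_ringInverse_of_isUnit _ (zX_unit I), M0.toFrac_algebraMap]
  congr 1
  refine RingHom.ext fun r => ?_
  simp [M0.toFrac_algebraMap, IsScalarTower.algebraMap_apply (Rbase I) (Rz I) 𝔽]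

theorem M0.toFrac_phiM_inverse {p : Rt I} (hp : IsUnit (algebraMap (Rt I) (Sloc I) p)) :
    M0.toFrac I (phiM I (Ring.inverse (algebraMap (Rt I) (Sloc I) p))) = (aeval ζ⁻¹ p)⁻¹ := by
  simpa only [RingHom.comp_apply, M0.toFrac_phiM_algebraMap] using
    map_ringInverse_of_isUnit ((M0.toFrac I).comp (phiM I)) hp

theorem M0.toFrac_phiM_inverse_X_sub_C (i : I) :
    M0.toFrac I (phiM I (Ring.inverse (algebraMap (Rt I) (Sloc I) (X - C (MvPolynomial.X i))))) =
      ζ * (algebraMap (Rz I) 𝔽 (1 - C (MvPolynomial.X i) * X))⁻¹ := by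
  rw [M0.toFrac_phiM_inverse I (isUnit_algebraMap_X_sub_C I i),
    aeval_inv_X_sub_C algebraMap_fractionRing_X_ne_zero, aeval_algebraMap_X, mul_inv, inv_inv]

theorem M0.toFrac_phiM_inverse_Pprod :
    M0.toFrac I (phiM I (Ring.inverse (algebraMap (Rt I) (Sloc I) (Pprod I)))) =
      ζ ^ Fintype.card I * (algebraMap (Rz I) 𝔽 (Qprod I))⁻¹ := by
  rw [M0.toFrac_phiM_inverse I (IsLocalization.Away.algebraMap_isUnit _), aeval_inv_Pprod,
    mul_inv, inv_pow, inv_inv]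

theorem M0.toFrac_psiM_inverse_Qprod :
    M0.toFrac I (psiM I (Ring.inverse (algebraMap (Rz I) (M1 I) (Qprod I)))) =
      (algebraMap (Rz I) 𝔽 (Qprod I))⁻¹ :=
  M0.toFrac_psiM_inverse I (IsLocalization.Away.algebraMap_isUnit _)

theorem exists_eq_X_mul_psiM_add_phiM (m : M0 I) : ∃ (B : M1 I) (A : Sloc I),
    m = algebraMap (Rz I) (M0 I) X * psiM I B + phiM I A := by
  obtain ⟨n, p, rfl⟩ := IsLocalization.Away.exists_eq_mul_inverse_pow (X * Qprod I) m
  obtain ⟨r, h, hr, rfl⟩ := exists_eq_add_X_pow_mul p n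
  refine ⟨algebraMap (Rz I) (M1 I) h * Ring.inverse (algebraMap (Rz I) (M1 I) (Qprod I)) ^ n,
    algebraMap (Rt I) (Sloc I) (X ^ (Fintype.card I * n) * reflect n r) *
      Ring.inverse (algebraMap (Rt I) (Sloc I) (Pprod I)) ^ n, ?_⟩
  apply M0.toFrac_injective I
  have hz : ζ ≠ 0 := algebraMap_fractionRing_X_ne_zero
  have hQ := algebraMap_Qprod_ne_zero I
  rw [map_mul, map_pow, M0.toFrac_inverse_algebraMap_X_mul_Qprod]
  simp only [map_add, map_mul, map_pow, M0.toFrac_algebraMap, M0.toFrac_psiM_algebraMap,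
    M0.toFrac_psiM_inverse_Qprod, M0.toFrac_phiM_algebraMap, M0.toFrac_phiM_inverse_Pprod, aeval_X]
  rw [← aeval_algebraMap_X (A := 𝔽) r, ← aeval_inv_reflect_mul_pow hz hr]
  simp only [mul_inv, mul_pow, inv_pow, ← pow_mul]
  field_simp
  ring

theorem mem_Ksub_of_phiM_eq_X_mul_psiM {A : Sloc I} {B : M1 I}
    (h : phiM I A = algebraMap (Rz I) (M0 I) X * psiM I B) : A ∈ Ksub I := by
  obtain ⟨k, P, rfl⟩ := IsLocalization.Away.exists_eq_mul_inverse_pow (Pprod I) A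
  obtain ⟨m, H, rfl⟩ := IsLocalization.Away.exists_eq_mul_inverse_pow (Qprod I) B
  refine algebraMap_mul_inverse_Pprod_pow_mem_Ksub I P k ?_
  rcases eq_or_ne P 0 with rfl | hP
  · exact degree_zero.trans_lt (WithBot.bot_lt_coe _)
  rw [degree_eq_natDegree hP, Nat.cast_lt]
  refine natDegree_lt_of_X_pow_mul_reverse_mul_eq hP (H := H) (U := Qprod I ^ m)
    (V := Qprod I ^ k) (by simp [coeff_zero_eq_eval_zero, Qprod_eval_zero])
    (pow_ne_zero _ (Qprod_ne_zero I)) ?_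
  apply IsFractionRing.injective (Rz I) 𝔽
  have hz : ζ ≠ 0 := algebraMap_fractionRing_X_ne_zero
  have hQ := algebraMap_Qprod_ne_zero I
  have h' := congrArg (M0.toFrac I) h
  simp only [map_mul, map_pow, M0.toFrac_algebraMap, M0.toFrac_psiM_algebraMap,
    M0.toFrac_psiM_inverse_Qprod, M0.toFrac_phiM_algebraMap, M0.toFrac_phiM_inverse_Pprod,
    mul_pow, inv_pow, ← pow_mul] at h' ⊢
  rw [← aeval_algebraMap_X (A := 𝔽) P.reverse, aeval_reverse hz]
  field_simp at h' ⊢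
  linear_combination ζ ^ P.natDegree * h'

theorem phiM_X_pow_mul_prod_inverse_pow (k : I → ℕ) (n : ℕ) (hn : n < ∑ i, k i) :
    phiM I (algebraMap (Rt I) (Sloc I) (X ^ n) *
        ∏ i, Ring.inverse (algebraMap (Rt I) (Sloc I) (X - C (MvPolynomial.X i))) ^ k i) =
      algebraMap (Rz I) (M0 I) X * psiM I (algebraMap (Rz I) (M1 I) (X ^ (∑ i, k i - n - 1)) *
        ∏ i, Ring.inverse (algebraMap (Rz I) (M1 I) (1 - C (MvPolynomial.X i) * X)) ^ k i) := by
  obtain ⟨a, ha⟩ := Nat.exists_eq_add_of_lt hn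
  apply M0.toFrac_injective I
  have hz : ζ ≠ 0 := algebraMap_fractionRing_X_ne_zero
  simp only [map_mul, map_pow, map_prod, M0.toFrac_algebraMap, M0.toFrac_psiM_algebraMap,
    M0.toFrac_phiM_algebraMap, aeval_X, M0.toFrac_phiM_inverse_X_sub_C,
    M0.toFrac_psiM_inverse I (isUnit_algebraMap_one_sub_C_mul_X I _), mul_pow,
    Finset.prod_mul_distrib, Finset.prod_pow_eq_pow_sum, ha, show n + a + 1 - n - 1 = a by omega]
  rw [inv_pow]
  field_simp
  ring

theorem exists_phiM_eq_X_mul_psiM_of_mem_Ksub {A : Sloc I} (hA : A ∈ Ksub I) :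
    ∃ B : M1 I, phiM I A = algebraMap (Rz I) (M0 I) X * psiM I B := by
  induction hA using Submodule.span_induction with
  | mem x hx =>
    obtain ⟨k, n, hn, rfl⟩ := hx
    exact ⟨_, phiM_X_pow_mul_prod_inverse_pow I k n hn⟩
  | zero => exact ⟨0, by rw [map_zero, map_zero, mul_zero]⟩
  | add x y _ _ hx hy =>
    obtain ⟨B₁, h₁⟩ := hx
    obtain ⟨B₂, h₂⟩ := hy
    exact ⟨B₁ + B₂, by rw [map_add, h₁, h₂, map_add, mul_add]⟩
  | smul r x _ hx =>
    obtain ⟨B, h⟩ := hx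
    exact ⟨r • B, by rw [phiM_smul, h, psiM_smul, mul_smul_comm]⟩

theorem cech_cohomology_of_O_minus_one :
    (∀ m : M0 I, ∃ (B : M1 I) (A : Sloc I),
      m = algebraMap (Rz I) (M0 I) (X : Rz I) * psiM I B + phiM I A) ∧
    (∀ A : Sloc I,
      (∃ B : M1 I, phiM I A = algebraMap (Rz I) (M0 I) (X : Rz I) * psiM I B)
        ↔ A ∈ Ksub I) :=
  ⟨exists_eq_X_mul_psiM_add_phiM I, fun _ =>
    ⟨fun ⟨_, h⟩ => mem_Ksub_of_phiM_eq_X_mul_psiM I h,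
      exists_phiM_eq_X_mul_psiM_of_mem_Ksub I⟩⟩
end
end
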